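/- arXiv:1112.4237 — 3 statements merged into one kernel-verified Lean document; each statement's English description precedes it below -/
import Mathlib

section
/- For every deterministic program M, max_μ GE[μ](M) = max_{ℓ'} GE[U⊗ℓ̇'](M), where the maximum on the left is over all probability distributions μ on ℍ × 𝕃, and U⊗ℓ̇' denotes the distribution λ(h,ℓ). if ℓ = ℓ' then U(h) else 0, with U the uniform distribution on ℍ. -/
/-!
Statement 7: For every deterministic program `M : ℍ × 𝕃 → 𝕆`,
`max_μ GE[μ](M) = max_{ℓ'} GE[U ⊗ ℓ̇'](M)`, where the maximum on the left is
over all probability distributions `μ` on `ℍ × 𝕃` and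
`U ⊗ ℓ̇' = λ(h,ℓ). if ℓ = ℓ' then U(h) else 0` with `U` uniform on `ℍ`.
-/

/-- Guessing entropy of a (sub)distribution `p` on a finite type `X`:
`𝓖(p) = Σ_{1≤i≤m} i · p(x_i)` with `x_1, …, x_m` sorted so that
`p(x_i) ≥ p(x_j)` whenever `i ≤ j`. -/
noncomputable def guess {X : Type*} [Fintype X] (p : X → ℝ) : ℝ :=
  ∑ i : Fin (Fintype.card X), ((i : ℕ) + 1 : ℝ) *
    p ((Fintype.equivFin X).symm
      (Tuple.sort (fun j => -p ((Fintype.equivFin X).symm j)) i))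

variable {Hi Li Oi : Type*}

/-- Marginal probability `μ(L = ℓ)`. -/
noncomputable def pL [Fintype Hi] (μ : Hi × Li → ℝ) (ℓ : Li) : ℝ := ∑ h, μ (h, ℓ)

/-- Joint probability `μ(O = o, L = ℓ)` where `O = M(H,L)`. -/
noncomputable def pOL [Fintype Hi] [DecidableEq Oi] (M : Hi × Li → Oi) (μ : Hi × Li → ℝ)
    (o : Oi) (ℓ : Li) : ℝ := ∑ h, if M (h, ℓ) = o then μ (h, ℓ) else 0

/-- Conditional guessing entropy `𝓖[μ](H|L)`. -/
noncomputable def condGuessHL [Fintype Hi] [Fintype Li] (μ : Hi × Li → ℝ) : ℝ :=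
  ∑ ℓ : Li, pL μ ℓ * guess (fun h : Hi => μ (h, ℓ) / pL μ ℓ)

/-- Conditional guessing entropy `𝓖[μ](H|O,L)` where `O = M(H,L)`. -/
noncomputable def condGuessHOL [Fintype Hi] [Fintype Li] [Fintype Oi] [DecidableEq Oi]
    (M : Hi × Li → Oi) (μ : Hi × Li → ℝ) : ℝ :=
  ∑ ℓ : Li, ∑ o : Oi, pOL M μ o ℓ *
    guess (fun h : Hi => (if M (h, ℓ) = o then μ (h, ℓ) else 0) / pOL M μ o ℓ)

/-- Guessing-entropy-based QIF `GE[μ](M) = 𝓖[μ](H|L) − 𝓖[μ](H|O,L)`. -/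
noncomputable def GE [Fintype Hi] [Fintype Li] [Fintype Oi] [DecidableEq Oi]
    (M : Hi × Li → Oi) (μ : Hi × Li → ℝ) : ℝ :=
  condGuessHL μ - condGuessHOL M μ

/-- `U ⊗ ℓ̇'`: the distribution `λ(h,ℓ). if ℓ = ℓ' then U(h) else 0`
with `U` the uniform distribution on `ℍ`. -/
noncomputable def unifAt [Fintype Hi] [DecidableEq Li] (ℓ' : Li) : Hi × Li → ℝ :=
  fun p => if p.2 = ℓ' then (Fintype.card Hi : ℝ)⁻¹ else 0

/-!
Sorting `p` decreasingly gives `𝓖(p) = (Σ_x p x + Σ_{x,y} min (p x) (p y)) / 2`, so the leakage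
at a low input `ℓ` is half the sum of `min (μ (x, ℓ)) (μ (y, ℓ))` over the pairs with
`M (x, ℓ) ≠ M (y, ℓ)`. For a weight `q ≥ 0` on `ℍ` this sum is at most `Σ q / |ℍ|` times the
number of such pairs: peeling off the lowest layer `c · 1_s` of `q` reduces this to indicators
`q = 1_s`, where it follows fiber by fiber from the monotonicity of `a α / (a + α)`. Hence
`GE[μ](M) ≤ Σ_ℓ μ(L = ℓ) · GE[U ⊗ ℓ̇](M)`, a convex combination of values that are attained.
-/

open Finset

theorem sum_sum_min_eq_of_antitone {n : ℕ} (r : Fin n → ℝ) (hr : Antitone r) :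
    ∑ i, ∑ j, min (r i) (r j) = ∑ i : Fin n, (2 * (i : ℕ) + 1) * r i := by
  induction n with
  | zero => simp
  | succ n ih =>
    have hlast : ∀ i, min (r i) (r (Fin.last n)) = r (Fin.last n) :=
      fun i => min_eq_right (hr (Fin.le_last i))
    have hinit := ih (fun i => r i.castSucc) (hr.comp_monotone Fin.strictMono_castSucc.monotone)
    simp only [Fin.sum_univ_castSucc, hlast, min_comm (r (Fin.last n)), sum_add_distrib, hinit,
      sum_const, card_univ, Fintype.card_fin, nsmul_eq_mul, Fin.val_castSucc, Fin.val_last]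
    push_cast
    ring

theorem guess_eq_sum_min {X : Type*} [Fintype X] (p : X → ℝ) :
    guess p = (∑ x, p x + ∑ x, ∑ y, min (p x) (p y)) / 2 := by
  set e : Fin (Fintype.card X) ≃ X :=
    (Tuple.sort fun j => -p ((Fintype.equivFin X).symm j)).trans (Fintype.equivFin X).symm
  have hanti : Antitone (p ∘ e) := fun i j hij =>
    neg_le_neg_iff.mp (Tuple.monotone_sort (fun j => -p ((Fintype.equivFin X).symm j)) hij)
  have hsum : ∑ x, p x = ∑ i, p (e i) := (e.sum_comp p).symm
  have hmin : ∑ x, ∑ y, min (p x) (p y) = ∑ i, ∑ j, min (p (e i)) (p (e j)) := by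
    rw [← e.sum_comp]
    exact sum_congr rfl fun i _ => (e.sum_comp _).symm
  have hguess : guess p = ∑ i : Fin (Fintype.card X), ((i : ℕ) + 1 : ℝ) * p (e i) := rfl
  rw [hguess, hsum, hmin, sum_sum_min_eq_of_antitone (fun i => p (e i)) hanti,
    ← sum_add_distrib, sum_div]
  exact sum_congr rfl fun i _ => by ring

theorem guess_const_mul {X : Type*} [Fintype X] (p : X → ℝ) {c : ℝ} (hc : 0 ≤ c) :
    guess (fun x => c * p x) = c * guess p := by
  simp only [guess_eq_sum_min, ← mul_min_of_nonneg _ _ hc, ← mul_sum]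
  ring

theorem sum_mul_guess_div_sum {X : Type*} [Fintype X] (p : X → ℝ) (hp : ∀ x, 0 ≤ p x) :
    (∑ y, p y) * guess (fun x => p x / ∑ y, p y) = guess p := by
  rw [← guess_const_mul _ (sum_nonneg fun y _ => hp y)]
  congr 1
  funext x
  rcases eq_or_ne (∑ y, p y) 0 with h | h
  · rw [(sum_eq_zero_iff_of_nonneg fun y _ => hp y).mp h x (mem_univ x), zero_div, mul_zero]
  · exact mul_div_cancel₀ _ h

variable {H O : Type*} [DecidableEq O]

def crossFiberMin [Fintype H] (f : H → O) (q : H → ℝ) : ℝ :=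
  ∑ x, ∑ y, if f x = f y then 0 else min (q x) (q y)

theorem sum_min_restrict_fiber [Fintype O] {f : H → O} {q : H → ℝ} (hq : ∀ x, 0 ≤ q x)
    (x y : H) :
    ∑ o, min (if f x = o then q x else 0) (if f y = o then q y else 0) =
      if f x = f y then min (q x) (q y) else 0 := by
  split_ifs with hxy
  · rw [sum_eq_single (f x) (fun o _ ho => by simp [← hxy, Ne.symm ho]) (by simp)]
    simp [hxy]
  · refine sum_eq_zero fun o _ => ?_
    by_cases hx : f x = o
    · rw [if_pos hx, if_neg (fun hy => hxy (hx.trans hy.symm)), min_eq_right (hq x)]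
    · rw [if_neg hx, min_eq_left (by split_ifs <;> simp [hq y])]

theorem guess_sub_sum_guess_fiber [Fintype H] [Fintype O] (f : H → O) {q : H → ℝ}
    (hq : ∀ x, 0 ≤ q x) :
    guess q - ∑ o, guess (fun h => if f h = o then q h else 0) = crossFiberMin f q / 2 := by
  simp only [guess_eq_sum_min, ← sum_div, sum_add_distrib]
  rw [sum_comm (f := fun o h => if f h = o then q h else 0)]
  have hfibers : ∑ o, ∑ x, ∑ y, min (if f x = o then q x else 0) (if f y = o then q y else 0) =
      ∑ x, ∑ y, if f x = f y then min (q x) (q y) else 0 := by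
    rw [sum_comm]
    refine sum_congr rfl fun x _ => ?_
    rw [sum_comm]
    exact sum_congr rfl fun y _ => sum_min_restrict_fiber hq x y
  simp only [sum_ite_eq, mem_univ, if_true, hfibers, crossFiberMin]
  rw [← sub_div, add_sub_add_left_eq_sub, ← sum_sub_distrib]
  congr 1
  refine sum_congr rfl fun x _ => ?_
  rw [← sum_sub_distrib]
  exact sum_congr rfl fun y _ => by split_ifs <;> ring

theorem GE_eq_sum_crossFiberMin [Fintype Hi] [Fintype Li] [Fintype Oi] [DecidableEq Oi]
    (M : Hi × Li → Oi) {μ : Hi × Li → ℝ} (hμ : ∀ a, 0 ≤ μ a) :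
    GE M μ = ∑ ℓ, crossFiberMin (fun h => M (h, ℓ)) (fun h => μ (h, ℓ)) / 2 := by
  have hHL : condGuessHL μ = ∑ ℓ, guess (fun h => μ (h, ℓ)) :=
    sum_congr rfl fun ℓ _ => sum_mul_guess_div_sum _ fun h => hμ _
  have hHOL : condGuessHOL M μ =
      ∑ ℓ, ∑ o, guess (fun h => if M (h, ℓ) = o then μ (h, ℓ) else 0) :=
    sum_congr rfl fun ℓ _ => sum_congr rfl fun o _ =>
      sum_mul_guess_div_sum _ fun h => by split_ifs <;> simp [hμ]
  rw [GE, hHL, hHOL, ← sum_sub_distrib]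
  exact sum_congr rfl fun ℓ _ => guess_sub_sum_guess_fiber _ fun h => hμ _

theorem crossFiberMin_const [Fintype H] (f : H → O) (c : ℝ) :
    crossFiberMin f (fun _ => c) = c * crossFiberMin f (fun _ => 1) := by
  simp only [crossFiberMin, mul_sum, min_self, mul_ite, mul_zero, mul_one]

theorem unifAt_nonneg [Fintype Hi] [DecidableEq Li] (ℓ' : Li) (a : Hi × Li) :
    0 ≤ unifAt ℓ' a := by
  unfold unifAt
  split_ifs <;> positivity

theorem sum_unifAt [Fintype Hi] [Fintype Li] [DecidableEq Li] [Nonempty Hi] (ℓ' : Li) :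
    ∑ a : Hi × Li, unifAt ℓ' a = 1 := by
  simp [unifAt, Fintype.sum_prod_type]

theorem GE_unifAt [Fintype Hi] [Fintype Li] [Fintype Oi] [DecidableEq Li] [DecidableEq Oi]
    (M : Hi × Li → Oi) (ℓ' : Li) :
    GE M (unifAt ℓ') =
      (Fintype.card Hi : ℝ)⁻¹ * crossFiberMin (fun h => M (h, ℓ')) (fun _ => 1) / 2 := by
  rw [GE_eq_sum_crossFiberMin M (unifAt_nonneg ℓ'), sum_eq_single ℓ']
  · simp only [unifAt, if_true]
    rw [crossFiberMin_const]
  · intro ℓ _ hℓ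
    simp only [unifAt, if_neg hℓ]
    rw [crossFiberMin_const, zero_mul, zero_div]
  · simp

theorem sum_sum_ite_mul_eq_sum_fiber [Fintype H] [Fintype O] (f : H → O) (w : H → ℝ) :
    ∑ x, ∑ y, (if f x = f y then 0 else w x * w y) =
      ∑ o, (∑ x with f x = o, w x) * ∑ x with f x ≠ o, w x := by
  have hrow : ∀ x, ∑ y, (if f x = f y then 0 else w x * w y) = w x * ∑ y with f y ≠ f x, w y :=
    fun x => by
      rw [sum_filter, mul_sum]
      exact sum_congr rfl fun y _ => by split_ifs <;> simp_all [eq_comm]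
  simp only [hrow, sum_mul]
  rw [← sum_fiberwise univ f]
  refine sum_congr rfl fun o _ => sum_congr rfl fun x hx => ?_
  rw [(mem_filter.mp hx).2]

/-- Monotonicity of `a α / (a + α)` in `a` and in `α`. -/
theorem add_mul_mul_le_add_mul_mul {a α b β : ℝ} (ha : 0 ≤ a) (hab : a ≤ b) (hα : 0 ≤ α)
    (hαβ : α ≤ β) : (b + β) * (a * α) ≤ (a + α) * (b * β) := by
  nlinarith [mul_nonneg (mul_nonneg ha (ha.trans hab)) (sub_nonneg.2 hαβ),
    mul_nonneg (mul_nonneg hα (hα.trans hαβ)) (sub_nonneg.2 hab)]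

theorem sum_mul_sum_sum_ite_mul_le [Fintype H] [Fintype O] (f : H → O) {v w : H → ℝ}
    (hv : ∀ x, 0 ≤ v x) (hvw : ∀ x, v x ≤ w x) :
    (∑ x, w x) * ∑ x, ∑ y, (if f x = f y then 0 else v x * v y) ≤
      (∑ x, v x) * ∑ x, ∑ y, (if f x = f y then 0 else w x * w y) := by
  simp only [sum_sum_ite_mul_eq_sum_fiber]
  rw [mul_sum univ _ (∑ x, w x), mul_sum univ _ (∑ x, v x)]
  refine sum_le_sum fun o _ => ?_
  rw [← sum_filter_add_sum_filter_not univ (f · = o) w,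
    ← sum_filter_add_sum_filter_not univ (f · = o) v]
  exact add_mul_mul_le_add_mul_mul (sum_nonneg fun x _ => hv x) (sum_le_sum fun x _ => hvw x)
    (sum_nonneg fun x _ => hv x) (sum_le_sum fun x _ => hvw x)

theorem card_mul_crossFiberMin_indicator_le [Fintype H] [DecidableEq H] [Fintype O] (f : H → O)
    (s : Finset H) :
    Fintype.card H * crossFiberMin f (fun x => if x ∈ s then 1 else 0) ≤
      #s * crossFiberMin f (fun _ => 1) := by
  have hzero_one : ∀ v : H → ℝ, (∀ x, v x = 0 ∨ v x = 1) →
      crossFiberMin f v = ∑ x, ∑ y, (if f x = f y then 0 else v x * v y) := fun v hv => by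
    refine sum_congr rfl fun x _ => sum_congr rfl fun y _ => ?_
    rcases hv x with hx | hx <;> rcases hv y with hy | hy <;> simp [hx, hy]
  have h := sum_mul_sum_sum_ite_mul_le f (v := fun x => if x ∈ s then 1 else 0)
    (w := fun _ => 1) (fun x => by split_ifs <;> norm_num) (fun x => by split_ifs <;> norm_num)
  rw [hzero_one _ fun x => by split_ifs <;> simp, hzero_one _ fun x => by simp]
  simpa using h

theorem crossFiberMin_const_mul_indicator_add [Fintype H] [DecidableEq H] (f : H → O)
    (s : Finset H) {c : ℝ} (hc : 0 ≤ c) {r : H → ℝ} (hr : ∀ x, 0 ≤ r x)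
    (hrs : ∀ x ∉ s, r x = 0) :
    crossFiberMin f (fun x => c * (if x ∈ s then 1 else 0) + r x) =
      c * crossFiberMin f (fun x => if x ∈ s then 1 else 0) + crossFiberMin f r := by
  simp only [crossFiberMin, mul_sum, ← sum_add_distrib]
  refine sum_congr rfl fun x _ => sum_congr rfl fun y _ => ?_
  split_ifs <;> simp [*, min_add_add_left, add_nonneg]

theorem card_mul_crossFiberMin_le [Fintype H] [DecidableEq H] [Fintype O] (f : H → O)
    {q : H → ℝ} (hq : ∀ x, 0 ≤ q x) :
    Fintype.card H * crossFiberMin f q ≤ (∑ x, q x) * crossFiberMin f (fun _ => 1) := by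
  suffices h : ∀ s : Finset H, ∀ q : H → ℝ, (∀ x, 0 ≤ q x) → (∀ x ∉ s, q x = 0) →
      Fintype.card H * crossFiberMin f q ≤ (∑ x, q x) * crossFiberMin f (fun _ => 1) from
    h univ q hq fun x hx => absurd (mem_univ x) hx
  intro s
  induction s using Finset.strongInduction with
  | H s ih =>
  intro q hq hqs
  rcases s.eq_empty_or_nonempty with rfl | hs
  · have hq0 : q = fun _ => 0 := funext fun x => hqs x (notMem_empty x)
    simp [hq0, crossFiberMin]
  obtain ⟨x₀, hx₀, hmin⟩ := s.exists_min_image q hs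
  set c := q x₀
  set r : H → ℝ := fun x => q x - c * (if x ∈ s then 1 else 0) with hr_def
  have hr : ∀ x, 0 ≤ r x := fun x => by
    by_cases hx : x ∈ s <;> simp [hr_def, hx, hmin x, hqs x]
  have hrs : ∀ x ∉ s.erase x₀, r x = 0 := fun x hx => by
    by_cases hxs : x ∈ s
    · obtain rfl : x = x₀ := by simpa [hxs] using hx
      simp [hr_def, hxs, c]
    · simp [hr_def, hxs, hqs x hxs]
  have hdecomp : q = fun x => c * (if x ∈ s then 1 else 0) + r x := by
    funext x; simp [hr_def]
  have hlayer := card_mul_crossFiberMin_indicator_le f s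
  have hrest := ih _ (erase_ssubset hx₀) r hr hrs
  rw [hdecomp, crossFiberMin_const_mul_indicator_add f s (hq x₀) hr
    fun x hx => hrs x fun h => hx (mem_of_mem_erase h), sum_add_distrib, ← mul_sum, sum_boole]
  simp only [filter_mem_eq_inter, univ_inter]
  nlinarith [mul_le_mul_of_nonneg_left hlayer (hq x₀)]

theorem sum_pL [Fintype Hi] [Fintype Li] (μ : Hi × Li → ℝ) : ∑ ℓ, pL μ ℓ = ∑ a, μ a := by
  rw [Fintype.sum_prod_type, sum_comm]
  rfl

theorem GE_le_sum_pL_mul_GE_unifAt [Fintype Hi] [Fintype Li] [Fintype Oi] [DecidableEq Li]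
    [DecidableEq Oi] [Nonempty Hi] (M : Hi × Li → Oi) {μ : Hi × Li → ℝ} (hμ : ∀ a, 0 ≤ μ a) :
    GE M μ ≤ ∑ ℓ, pL μ ℓ * GE M (unifAt ℓ) := by
  classical
  rw [GE_eq_sum_crossFiberMin M hμ]
  refine sum_le_sum fun ℓ _ => ?_
  have hcard : (0 : ℝ) < Fintype.card Hi := by exact_mod_cast Fintype.card_pos
  have h := card_mul_crossFiberMin_le (fun h => M (h, ℓ)) fun h => hμ (h, ℓ)
  rw [← le_div_iff₀' hcard] at h
  rw [GE_unifAt, pL]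
  exact (div_le_div_of_nonneg_right h zero_le_two).trans_eq (by ring)

/-- `max_μ GE[μ](M) = max_{ℓ'} GE[U ⊗ ℓ̇'](M)`. -/
theorem maxGE_eq_max_unifAt
    [Fintype Hi] [Fintype Li] [Fintype Oi] [DecidableEq Li] [DecidableEq Oi]
    [Nonempty Hi] [Nonempty Li]
    (M : Hi × Li → Oi) :
    sSup {x : ℝ | ∃ μ : Hi × Li → ℝ, (∀ a, 0 ≤ μ a) ∧ (∑ a, μ a = 1) ∧ x = GE M μ} =
      Finset.univ.sup' Finset.univ_nonempty (fun ℓ' : Li => GE M (unifAt ℓ')) := by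
  set S := univ.sup' univ_nonempty fun ℓ' : Li => GE M (unifAt ℓ')
  obtain ⟨ℓ₀, -, hℓ₀⟩ := exists_mem_eq_sup' univ_nonempty fun ℓ' : Li => GE M (unifAt ℓ')
  refine IsGreatest.csSup_eq ⟨⟨unifAt ℓ₀, unifAt_nonneg ℓ₀, sum_unifAt ℓ₀, hℓ₀⟩, ?_⟩
  rintro _ ⟨μ, hμ, hsum, rfl⟩
  calc GE M μ ≤ ∑ ℓ, pL μ ℓ * GE M (unifAt ℓ) := GE_le_sum_pL_mul_GE_unifAt M hμ
    _ ≤ ∑ ℓ, pL μ ℓ * S := sum_le_sum fun ℓ _ =>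
        mul_le_mul_of_nonneg_left (le_sup' (fun ℓ' : Li => GE M (unifAt ℓ')) (mem_univ ℓ))
          (sum_nonneg fun h _ => hμ (h, ℓ))
    _ = S := by rw [← sum_mul, sum_pL, hsum, one_mul]
end

section
/- Let M be a deterministic program and let q > 0 be any positive real. Then BE[⟨μ,h,ℓ⟩](M) ≤ q holds for every belief μ on ℍ, every h ∈ ℍ, and every ℓ ∈ 𝕃 if and only if M is non-interferent. -/
variable {Hi Li Oi : Type*}

/-- Relative entropy (distance) `D(μ → μ') = Σ_h μ'(h) · log₂(μ'(h)/μ(h))`. -/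
noncomputable def relD {X : Type*} [Fintype X] (μ μ' : X → ℝ) : ℝ :=
  ∑ x, μ' x * Real.logb 2 (μ' x / μ x)

/-- The point-mass distribution `ḣ` at `h`. -/
noncomputable def pointMass {X : Type*} [DecidableEq X] (h : X) : X → ℝ :=
  fun h' => if h = h' then 1 else 0

/-- The updated belief `μ|o_E`. -/
noncomputable def postBelief [Fintype Hi] [DecidableEq Oi]
    (M : Hi × Li → Oi) (μ : Hi → ℝ) (ℓE : Li) (oE : Oi) : Hi → ℝ :=
  fun h => if M (h, ℓE) = oE then μ h / (∑ h', if M (h', ℓE) = oE then μ h' else 0) else 0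

/-- Belief-based QIF `BE[⟨μ,h_E,ℓ_E⟩](M) = D(μ → ḣ_E) − D(μ|o_E → ḣ_E)`. -/
noncomputable def BE [Fintype Hi] [DecidableEq Hi] [DecidableEq Oi]
    (M : Hi × Li → Oi) (μ : Hi → ℝ) (hE : Hi) (ℓE : Li) : ℝ :=
  relD μ (pointMass hE) - relD (postBelief M μ ℓE (M (hE, ℓE))) (pointMass hE)

/-!
After the observation `o_E = M(h_E, ℓ_E)`, the relative entropies to the point mass at `h_E`
are `-log₂ μ(h_E)` before and `-log₂ (μ(h_E) / μ_{ℓ_E}(o_E))` after, so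
`BE = -log₂ μ_{ℓ_E}(o_E)`. For a non-interferent `M` every output has probability `1`, hence
`BE = 0 ≤ q`. If instead `M(h₀, ℓ) ≠ M(h₁, ℓ)`, a belief concentrating all but `2^(-q)` of its mass
on `h₁` gives the output `M(h₀, ℓ)` probability below `2^(-q)`, hence `BE > q`.
-/

open Finset

/-- `μ_ℓ(o)` in the paper's notation. -/
noncomputable def outputProb [Fintype Hi] [DecidableEq Oi]
    (M : Hi × Li → Oi) (μ : Hi → ℝ) (ℓ : Li) (o : Oi) : ℝ :=
  ∑ h ∈ {h | M (h, ℓ) = o}, μ h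

lemma relD_pointMass {X : Type*} [Fintype X] [DecidableEq X] (μ : X → ℝ) (h : X) :
    relD μ (pointMass h) = -Real.logb 2 (μ h) := by
  simp [relD, pointMass, ite_mul, Real.logb_inv]

section

variable [Fintype Hi] [DecidableEq Oi] (M : Hi × Li → Oi) {μ : Hi → ℝ}

lemma postBelief_eq_div_outputProb {ℓ : Li} {o : Oi} {h : Hi} (hMh : M (h, ℓ) = o) :
    postBelief M μ ℓ o h = μ h / outputProb M μ ℓ o := by
  simp [postBelief, outputProb, hMh, sum_filter]

lemma le_outputProb (hμ : ∀ x, 0 ≤ μ x) (h : Hi) (ℓ : Li) :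
    μ h ≤ outputProb M μ ℓ (M (h, ℓ)) :=
  single_le_sum (fun x _ => hμ x) (by simp)

lemma outputProb_le_one_sub (hμ : ∀ x, 0 ≤ μ x) (hμ1 : ∑ x, μ x = 1) {ℓ : Li} {o : Oi}
    {h : Hi} (hMh : M (h, ℓ) ≠ o) :
    outputProb M μ ℓ o ≤ 1 - μ h := by
  classical
  rw [← hμ1, ← sum_erase_eq_sub (mem_univ h)]
  exact sum_le_sum_of_subset_of_nonneg (fun x hx => by aesop) fun x _ _ => hμ x

lemma outputProb_eq_one (hμ1 : ∑ x, μ x = 1) {ℓ : Li} {o : Oi} (hMo : ∀ h, M (h, ℓ) = o) :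
    outputProb M μ ℓ o = 1 := by
  simpa [outputProb, hMo] using hμ1

lemma BE_eq_neg_logb_outputProb [DecidableEq Hi] (hμ : ∀ x, 0 < μ x) (h : Hi) (ℓ : Li) :
    BE M μ h ℓ = -Real.logb 2 (outputProb M μ ℓ (M (h, ℓ))) := by
  have hout : 0 < outputProb M μ ℓ (M (h, ℓ)) :=
    (hμ h).trans_le (le_outputProb M (fun x => (hμ x).le) h ℓ)
  rw [BE, relD_pointMass, relD_pointMass, postBelief_eq_div_outputProb M rfl,
    Real.logb_div (hμ h).ne' hout.ne']
  ring

lemma lt_BE_iff_outputProb_lt [DecidableEq Hi] (hμ : ∀ x, 0 < μ x) (h : Hi) (ℓ : Li) (q : ℝ) :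
    q < BE M μ h ℓ ↔ outputProb M μ ℓ (M (h, ℓ)) < 2 ^ (-q) := by
  have hout : 0 < outputProb M μ ℓ (M (h, ℓ)) :=
    (hμ h).trans_le (le_outputProb M (fun x => (hμ x).le) h ℓ)
  rw [BE_eq_neg_logb_outputProb M hμ, lt_neg, Real.logb_lt_iff_lt_rpow one_lt_two hout]

end

lemma exists_belief_one_sub_lt [Fintype Hi] (h : Hi) {ε : ℝ} (hε0 : 0 < ε) (hε1 : ε ≤ 1) :
    ∃ μ : Hi → ℝ, (∀ x, 0 < μ x) ∧ ∑ x, μ x = 1 ∧ 1 - μ h < ε := by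
  classical
  have hn : (0 : ℝ) < Fintype.card Hi := by exact_mod_cast Fintype.card_pos_iff.mpr ⟨h⟩
  refine ⟨fun x => (1 - ε) * pointMass h x + ε / Fintype.card Hi, fun x => ?_, ?_, ?_⟩
  · have : 0 ≤ pointMass h x := by unfold pointMass; split_ifs <;> norm_num
    exact add_pos_of_nonneg_of_pos (mul_nonneg (sub_nonneg.2 hε1) this) (by positivity)
  · simp [sum_add_distrib, pointMass, mul_div_cancel₀ _ hn.ne']
  · have : 0 < ε / Fintype.card Hi := by positivity
    simp only [pointMass, if_true, mul_one]
    linarith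

theorem BE_le_q_forall_iff_noninterferent_general
    [Fintype Hi] [DecidableEq Hi] [DecidableEq Oi]
    (M : Hi × Li → Oi) (q : ℝ) (hq : 0 < q) :
    (∀ μ : Hi → ℝ, (∀ h', 0 < μ h') → (∑ h', μ h' = 1) →
        ∀ (h : Hi) (ℓ : Li), BE M μ h ℓ ≤ q) ↔
      (∀ (h h' : Hi) (ℓ : Li), M (h, ℓ) = M (h', ℓ)) := by
  constructor
  · intro hBE
    by_contra! ⟨h₀, h₁, ℓ, hne⟩
    have hε : (2 : ℝ) ^ (-q) < 1 :=
      Real.rpow_lt_one_of_one_lt_of_neg one_lt_two (neg_neg_of_pos hq)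
    obtain ⟨μ, hμ, hμ1, hμh₁⟩ := exists_belief_one_sub_lt h₁ (by positivity) hε.le
    have hout : outputProb M μ ℓ (M (h₀, ℓ)) < 2 ^ (-q) :=
      (outputProb_le_one_sub M (fun x => (hμ x).le) hμ1 (Ne.symm hne)).trans_lt hμh₁
    exact (hBE μ hμ hμ1 h₀ ℓ).not_gt ((lt_BE_iff_outputProb_lt M hμ h₀ ℓ q).2 hout)
  · intro hni μ hμ hμ1 h ℓ
    rw [BE_eq_neg_logb_outputProb M hμ, outputProb_eq_one M hμ1 fun x => hni x h ℓ,
      Real.logb_one, neg_zero]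
    exact hq.le

/-- `BE[⟨μ,h,ℓ⟩](M) ≤ q` holds for every belief `μ`, every `h` and every `ℓ`
iff `M` is non-interferent. -/
theorem BE_le_q_forall_iff_noninterferent
    [Fintype Hi] [Fintype Li] [Fintype Oi] [DecidableEq Hi] [DecidableEq Oi]
    [Nonempty Hi] [Nonempty Li]
    (M : Hi × Li → Oi) (q : ℝ) (hq : 0 < q) :
    (∀ μ : Hi → ℝ, (∀ h', 0 < μ h') → (∑ h', μ h' = 1) →
        ∀ (h : Hi) (ℓ : Li), BE M μ h ℓ ≤ q) ↔
      (∀ (h h' : Hi) (ℓ : Li), M (h, ℓ) = M (h', ℓ)) :=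
  BE_le_q_forall_iff_noninterferent_general M q hq
end

section
/- Let q ≥ 1/2 and let M : ℍ → 𝕆 be a deterministic program without low-security inputs such that GE[U](M) > q and such that every program M' whose trace set is a proper subset of ⟦M⟧ (i.e., every restriction of M to a proper nonempty subset of ℍ) satisfies GE[U](M') ≤ q. Then |⟦M⟧| = |ℍ| ≤ ⌊(⌊q⌋+1)²/(⌊q⌋+1−q)⌋ + 1. -/
/-- The uniform distribution on a finite type. -/
noncomputable def unif (X : Type*) [Fintype X] : X → ℝ :=
  fun _ => (Fintype.card X : ℝ)⁻¹

variable {Hi Oi : Type*}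

/-- Probability `μ(O = o)` where `O = M(H)` (no low-security inputs). -/
noncomputable def pO [Fintype Hi] [DecidableEq Oi] (M : Hi → Oi) (μ : Hi → ℝ) (o : Oi) :
    ℝ := ∑ h, if M h = o then μ h else 0

/-- Conditional guessing entropy `𝓖[μ](H|O)` where `O = M(H)`. -/
noncomputable def condGuessHO [Fintype Hi] [Fintype Oi] [DecidableEq Oi]
    (M : Hi → Oi) (μ : Hi → ℝ) : ℝ :=
  ∑ o : Oi, pO M μ o * guess (fun h : Hi => (if M h = o then μ h else 0) / pO M μ o)

/-- Guessing-entropy-based QIF for programs without low-security inputs: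
`GE[μ](M) = 𝓖[μ](H) − 𝓖[μ](H|O)`. -/
noncomputable def GE0 [Fintype Hi] [Fintype Oi] [DecidableEq Oi]
    (M : Hi → Oi) (μ : Hi → ℝ) : ℝ :=
  guess μ - condGuessHO M μ

open Finset

lemma guess_ite {X : Type*} [Fintype X] (P : X → Prop) [DecidablePred P] (c : ℝ) (hc : 0 < c) :
    guess (fun x => if P x then c else 0) =
      c * (((Finset.univ.filter P).card : ℝ) * ((Finset.univ.filter P).card + 1)) / 2 := by
  classical
  set n := Fintype.card X with hn
  set e := Fintype.equivFin X with he
  set p : X → ℝ := fun x => if P x then c else 0 with hp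
  set σ := Tuple.sort (fun j => -p (e.symm j)) with hσ
  set s := (Finset.univ.filter P).card with hs
  have hmono : Monotone ((fun j => -p (e.symm j)) ∘ σ) := Tuple.monotone_sort _
  have hanti : ∀ i j : Fin n, i ≤ j → p (e.symm (σ j)) ≤ p (e.symm (σ i)) := by
    intro i j hij
    have := hmono hij
    simp only [Function.comp] at this
    linarith
  have hval : ∀ j : Fin n, p (e.symm (σ j)) = c ∨ p (e.symm (σ j)) = 0 := by
    intro j; by_cases h : P (e.symm (σ j)) <;> simp [hp, h]
  have hTcard : (Finset.univ.filter (fun j : Fin n => P (e.symm (σ j)))).card = s := by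
    rw [hs, ← Fintype.card_subtype, ← Fintype.card_subtype]
    exact Fintype.card_congr (Equiv.subtypeEquiv ((σ : Equiv.Perm (Fin n)).trans e.symm)
      (fun j => Iff.rfl))
  -- down-closedness
  have hdown : ∀ i j : Fin n, i ≤ j → P (e.symm (σ j)) → P (e.symm (σ i)) := by
    intro i j hij hPj
    have h1 : p (e.symm (σ j)) = c := by simp [hp, hPj]
    have h2 := hanti i j hij
    rcases hval i with h | h
    · by_contra hc'; simp [hp, hc'] at h; linarith
    · rw [h, h1] at h2; linarith
  have hkey : ∀ j : Fin n, P (e.symm (σ j)) ↔ (j : ℕ) < s := by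
    intro j
    constructor
    · intro hPj
      have hsub : Finset.Iic j ⊆ Finset.univ.filter (fun i : Fin n => P (e.symm (σ i))) := by
        intro i hi
        simp only [Finset.mem_Iic] at hi
        simp only [Finset.mem_filter, Finset.mem_univ, true_and]
        exact hdown i j hi hPj
      have := Finset.card_le_card hsub
      rw [hTcard, Fin.card_Iic] at this
      omega
    · intro hj
      by_contra hPj
      have hsub : Finset.univ.filter (fun i : Fin n => P (e.symm (σ i))) ⊆ Finset.Iio j := by
        intro i hi
        simp only [Finset.mem_filter, Finset.mem_univ, true_and] at hi
        simp only [Finset.mem_Iio]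
        by_contra hij
        exact hPj (hdown j i (le_of_not_gt hij) hi)
      have := Finset.card_le_card hsub
      rw [hTcard, Fin.card_Iio] at this
      omega
  have hterm : ∀ j : Fin n, ((j : ℕ) + 1 : ℝ) * p (e.symm (σ j)) =
      (if (j : ℕ) < s then ((j : ℕ) + 1 : ℝ) * c else 0) := by
    intro j
    by_cases h : P (e.symm (σ j))
    · rw [if_pos ((hkey j).mp h)]; simp [hp, h]
    · rw [if_neg (fun hlt => h ((hkey j).mpr hlt))]; simp [hp, h]
  have hsn : s ≤ n := by rw [hs, hn, ← Fintype.card_subtype]; exact Fintype.card_subtype_le _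
  calc guess p = ∑ j : Fin n, ((j : ℕ) + 1 : ℝ) * p (e.symm (σ j)) := rfl
    _ = ∑ j : Fin n, (if (j : ℕ) < s then ((j : ℕ) + 1 : ℝ) * c else 0) := by
        exact Finset.sum_congr rfl (fun j _ => hterm j)
    _ = ∑ i ∈ Finset.range n, (if i < s then ((i : ℝ) + 1) * c else 0) :=
        Fin.sum_univ_eq_sum_range (fun i => if i < s then ((i : ℝ) + 1) * c else 0) n
    _ = ∑ i ∈ Finset.range s, ((i : ℝ) + 1) * c := by
        rw [← Finset.sum_subset (Finset.range_subset_range.mpr hsn)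
          (fun x _ hx => if_neg (by simpa using hx))]
        exact Finset.sum_congr rfl (fun i hi => if_pos (Finset.mem_range.mp hi))
    _ = c * ((s : ℝ) * ((s : ℝ) + 1)) / 2 := by
        induction s with
        | zero => simp
        | succ m ih => rw [Finset.sum_range_succ, ih] ; push_cast ; ring

lemma GE0_unif_eq {X O : Type*} [Fintype X] [Nonempty X] [Fintype O] [DecidableEq O]
    (M : X → O) :
    GE0 M (unif X) = ((Fintype.card X : ℝ) ^ 2
        - ∑ o : O, ((Finset.univ.filter (fun h => M h = o)).card : ℝ) ^ 2)
      / (2 * Fintype.card X) := by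
  classical
  set n := Fintype.card X with hn
  have hn0 : 0 < n := Fintype.card_pos
  have hnR : (0 : ℝ) < (n : ℝ) := by exact_mod_cast hn0
  set cnt : O → ℕ := fun o => (Finset.univ.filter (fun h => M h = o)).card with hcnt
  -- guess of uniform
  have hguess : guess (unif X) = ((n : ℝ) + 1) / 2 := by
    have h1 : unif X = fun x : X => if (fun _ : X => True) x then (n : ℝ)⁻¹ else 0 := by
      funext x; simp [unif, hn]
    rw [h1, guess_ite _ _ (by positivity)]
    simp only [Finset.filter_true, Finset.card_univ, ← hn]
    field_simp
  -- pO
  have hpO : ∀ o, pO M (unif X) o = (cnt o : ℝ) / n := by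
    intro o
    rw [pO, Finset.sum_ite]
    simp [unif, ← hn, hcnt, div_eq_mul_inv]
  -- per-o term
  have hterm : ∀ o : O, pO M (unif X) o *
      guess (fun h : X => (if M h = o then unif X h else 0) / pO M (unif X) o)
      = (cnt o : ℝ) * ((cnt o : ℝ) + 1) / (2 * n) := by
    intro o
    by_cases h0 : cnt o = 0
    · rw [hpO o, h0]
      simp
    · have hc0 : (0 : ℝ) < (cnt o : ℝ) := by
        exact_mod_cast Nat.pos_of_ne_zero h0
      have hvec : (fun h : X => (if M h = o then unif X h else 0) / pO M (unif X) o)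
          = fun h : X => if M h = o then ((cnt o : ℝ))⁻¹ else 0 := by
        funext h
        rw [hpO o]
        split_ifs with hMh
        · rw [unif]
          rw [← hn]
          field_simp
        · simp
      rw [hvec, guess_ite _ _ (by positivity), hpO o,
        show (#(filter (fun h => M h = o) univ)) = cnt o from rfl]
      field_simp
  have hsumcnt : ∑ o : O, (cnt o : ℕ) = n := by
    rw [hn, ← Finset.card_univ]
    exact (Finset.card_eq_sum_card_fiberwise (f := M) (fun x _ => Finset.mem_univ (M x))).symm ▸ rfl
  have hcond : condGuessHO M (unif X) =
      ((∑ o : O, ((cnt o : ℝ)) ^ 2) + n) / (2 * n) := by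
    rw [condGuessHO]
    rw [Finset.sum_congr rfl (fun o _ => hterm o)]
    rw [← Finset.sum_div]
    congr 1
    have : ((n : ℝ)) = ∑ o : O, (cnt o : ℝ) := by
      rw [← hsumcnt]; push_cast; ring
    rw [this, ← Finset.sum_add_distrib]
    exact Finset.sum_congr rfl (fun o _ => by ring)
  rw [GE0, hguess, hcond]
  field_simp
  ring


lemma L_cancel {x y c : ℝ} (hc : 0 < c) (h : x * c ≤ y * c) : x ≤ y :=
  le_of_mul_le_mul_right h hc

lemma L_A (q k t n : ℝ) (hq0 : 0 < q) (hku : 0 < k + 1 - q)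
    (hkT : k + 1 ≤ t) (hc : t ≤ 2*q) (hNT : (n-1)*(t-q) ≤ t^2) :
    (n-1)*(k+1-q) ≤ (k+1)^2 := by
  have hTq : 0 < t - q := by linarith
  have e3 : (t-q)*(k+1-q) ≤ q*q :=
    mul_le_mul (by linarith) (by linarith) (by linarith) hq0.le
  have h1 : t*(k+1) ≤ q*(t+(k+1)) := by nlinarith [e3]
  have h2 : t^2*(k+1-q) ≤ (k+1)^2*(t-q) := by
    nlinarith [mul_nonneg (sub_nonneg.2 hkT) (sub_nonneg.2 h1)]
  have h3 := mul_le_mul_of_nonneg_right hNT hku.le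
  exact L_cancel hTq (by nlinarith [h3, h2])

lemma L_B1odd (q k n : ℝ) (hK1 : 1 ≤ k) (hku : 0 < k + 1 - q)
    (hTq : 0 < 2*k + 1 - q)
    (hQC : (2*k+1)^2 - 2*q*(2*k+1) - (2*k+1) + q ≤ 0)
    (hNT : (n-1)*(2*k+1-q) ≤ (2*k+1)^2) :
    (n-1)*(k+1-q) ≤ (k+1)^2 := by
  have hq1 : 2*k*(2*k+1) ≤ q*(4*k+1) := by nlinarith [hQC]
  have hq2 : (2*k+1)*(k+1) ≤ q*(3*k+2) := by
    nlinarith [hq1, mul_nonneg (mul_nonneg (sq_nonneg (2*k+1)) (sub_nonneg.2 hK1)) (le_of_lt (by linarith : (0:ℝ) < 4*k+1)),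
      mul_le_mul_of_nonneg_left hq1 (by linarith : (0:ℝ) ≤ 3*k+2), hK1]
  have h2 : (2*k+1)^2*(k+1-q) ≤ (k+1)^2*(2*k+1-q) := by
    nlinarith [mul_nonneg (by linarith : (0:ℝ) ≤ k) (sub_nonneg.2 hq2)]
  have h3 := mul_le_mul_of_nonneg_right hNT hku.le
  exact L_cancel hTq (by nlinarith [h3, h2])

lemma L_B1even (q k n : ℝ) (hK0 : 0 ≤ k) (hku : 0 < k + 1 - q)
    (hTq : 0 < 2*k + 2 - q)
    (hQC : (2*k+2)^2 - 2*q*(2*k+2) - (2*k+2) + q ≤ 0)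
    (hNT : (n-1)*(2*k+2-q) ≤ (2*k+2)^2) :
    (n-1)*(k+1-q) ≤ (k+1)^2 := by
  have hq1 : (2*k+2)*(2*k+1) ≤ q*(4*k+3) := by nlinarith [hQC]
  have hq2 : 2*k+2 ≤ 3*q := by
    nlinarith [mul_le_mul_of_nonneg_left hq1 (by norm_num : (0:ℝ) ≤ 3), hK0]
  have h2 : (2*k+2)^2*(k+1-q) ≤ (k+1)^2*(2*k+2-q) := by
    nlinarith [mul_nonneg (mul_nonneg hK0 hK0) (sub_nonneg.2 hq2),
      mul_nonneg hK0 (sub_nonneg.2 hq2), sub_nonneg.2 hq2]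
  have h3 := mul_le_mul_of_nonneg_right hNT hku.le
  exact L_cancel hTq (by nlinarith [h3, h2])

lemma L_B2big (q k n : ℝ) (hq : 1/2 ≤ q) (hku : 0 < k + 1 - q)
    (hN1 : n - 1 ≤ 2*q + 1) :
    (n-1)*(k+1-q) ≤ (k+1)^2 := by
  have h1 : (2*q+1)*(k+1-q) ≤ (k+1)^2 := by
    nlinarith [sq_nonneg (k+1-q-1/2), hq, hku]
  have h2 := mul_le_mul_of_nonneg_right hN1 hku.le
  linarith



lemma L_B2odd (q k n : ℝ) (hK1 : 1 ≤ k) (hk1 : k ≤ q) (hku : 0 < k + 1 - q)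
    (hTq : 0 < 2*k + 1 - q)
    (hst : 2*(n-1)*(2*k+1-q) ≤ (2*k+1)*(2*(2*k+1)-1)) :
    (n-1)*(k+1-q) ≤ (k+1)^2 := by
  have h6 : (0:ℝ) ≤ 6*k^2 + 2*k - 1 := by nlinarith [hK1]
  have h2 : (2*k+1)*(2*(2*k+1)-1)*(k+1-q) ≤ 2*(k+1)^2*(2*k+1-q) := by
    nlinarith [mul_nonneg (sub_nonneg.2 hk1) h6,
      mul_nonneg (mul_nonneg (sub_nonneg.2 hK1) (by linarith : (0:ℝ) ≤ k)) (by linarith : (0:ℝ) ≤ k)]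
  have h3 := mul_le_mul_of_nonneg_right hst hku.le
  have h4 : ((n-1)*(k+1-q)) * (2*(2*k+1-q)) ≤ ((k+1)^2) * (2*(2*k+1-q)) := by
    nlinarith [h3, h2]
  exact L_cancel (by linarith) h4

lemma L_B2even (q k n : ℝ) (hK0 : 0 ≤ k) (hqK : k + 1/2 ≤ q) (hku : 0 < k + 1 - q)
    (hTq : 0 < 2*k + 2 - q)
    (hst : 2*(n-1)*(2*k+2-q) ≤ (2*k+2)*(2*(2*k+2)-1)) :
    (n-1)*(k+1-q) ≤ (k+1)^2 := by
  have hq3 : 0 ≤ (3*k+2)*q - (k+1)*(2*k+1) := by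
    nlinarith [mul_le_mul_of_nonneg_left hqK (by linarith : (0:ℝ) ≤ 3*k+2), mul_nonneg hK0 hK0]
  have h2 : (2*k+2)*(2*(2*k+2)-1)*(k+1-q) ≤ 2*(k+1)^2*(2*k+2-q) := by
    nlinarith [mul_nonneg (by linarith : (0:ℝ) ≤ k+1) hq3]
  have h3 := mul_le_mul_of_nonneg_right hst hku.le
  have h4 : ((n-1)*(k+1-q)) * (2*(2*k+2-q)) ≤ ((k+1)^2) * (2*(2*k+2-q)) := by
    nlinarith [h3, h2]
  exact L_cancel (by linarith) h4

set_option maxHeartbeats 1000000 in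
lemma key_ineq (q : ℝ) (hq : 1/2 ≤ q) (k : ℕ) (hk1 : (k : ℝ) ≤ q) (hk2 : q < (k : ℝ) + 1)
    (a t Q Sq n : ℕ)
    (hn : n = a + t) (hSq : Sq = a ^ 2 + Q)
    (hQt : Q ≤ t ^ 2) (hQa : Q ≤ a * t) (hSn : n ≤ Sq)
    (hF : 2 * q * n < (n : ℝ) ^ 2 - Sq)
    (hR1 : ((n : ℝ) - 1) ^ 2 - (((a : ℝ) - 1) ^ 2 + Q) ≤ 2 * q * ((n : ℝ) - 1)) :
    ((n : ℝ)) - 1 ≤ ((k : ℝ) + 1) ^ 2 / ((k : ℝ) + 1 - q) := by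
  have hnR : (n : ℝ) = (a : ℝ) + t := by exact_mod_cast hn
  have hSR : (Sq : ℝ) = (a : ℝ) ^ 2 + Q := by exact_mod_cast hSq
  have hQtR : (Q : ℝ) ≤ (t : ℝ) ^ 2 := by exact_mod_cast hQt
  have hQaR : (Q : ℝ) ≤ (a : ℝ) * t := by exact_mod_cast hQa
  have hSnR : (n : ℝ) ≤ Sq := by exact_mod_cast hSn
  have hA0 : (0:ℝ) ≤ a := Nat.cast_nonneg a
  have hT0 : (0:ℝ) ≤ t := Nat.cast_nonneg t
  have hN0 : (0:ℝ) ≤ n := Nat.cast_nonneg n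
  have hK0 : (0:ℝ) ≤ k := Nat.cast_nonneg k
  have hku : (0:ℝ) < (k : ℝ) + 1 - q := by linarith
  have hq0 : (0:ℝ) < q := by linarith
  -- expansion equalities
  have e1 : (n:ℝ)^2 = (a:ℝ)^2 + 2*((a:ℝ)*t) + (t:ℝ)^2 := by rw [hnR]; ring
  have e2 : (n:ℝ)*t = (a:ℝ)*t + (t:ℝ)^2 := by rw [hnR]; ring
  have e3 : q*(n:ℝ) = q*a + q*t := by rw [hnR]; ring
  have e4 : (n:ℝ)^2 = (a:ℝ)*n + (t:ℝ)*n := by rw [hnR]; ring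
  have e5 : (a:ℝ)*n = (a:ℝ)^2 + (a:ℝ)*t := by rw [hnR]; ring
  -- n > 2
  have hN2 : (2:ℝ) < n := by
    have h1 : (n:ℝ) * 1 ≤ (n:ℝ) * (2 * q) := mul_le_mul_of_nonneg_left (by linarith) hN0
    have h2 : 2 * (n:ℝ) < (n:ℝ) ^ 2 := by linarith
    by_contra hcon
    push_neg at hcon
    have h3 := mul_le_mul_of_nonneg_right hcon hN0
    linarith [h3, h2]
  have hR1' : (n:ℝ) ^ 2 - Sq - 2 * q * n ≤ 2 * t - 2 * q := by linarith [hR1, hSR, hnR]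
  have htq : q < (t:ℝ) := by linarith
  have hkt : (k:ℝ) + 1 ≤ t := by
    have h : k < t := by exact_mod_cast lt_of_le_of_lt hk1 htq
    exact_mod_cast h
  have hTq : (0:ℝ) < (t:ℝ) - q := by linarith
  have hstar : 2 * ((n:ℝ) - 1) * ((t:ℝ) - q) ≤ (Q:ℝ) + (t:ℝ) ^ 2 := by linarith
  rw [le_div_iff₀ hku]
  rcases le_or_gt (t:ℝ) (2*q) with hcase | hcase
  · exact L_A q k t n hq0 hku hkt hcase (by linarith)
  · rcases le_or_gt (t:ℝ) (a:ℝ) with hta | hta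
    · -- B1
      have hp1 := mul_le_mul_of_nonneg_right hta hTq.le
      have hQC : (t:ℝ)^2 - 2*q*t - t + q ≤ 0 := by linarith [hp1, hQtR, hR1']
      have hNT : ((n:ℝ)-1)*((t:ℝ)-q) ≤ (t:ℝ)^2 := by linarith
      have hTlt : (t:ℝ) < 2*q + 1 := by
        by_contra hcon
        push_neg at hcon
        have hp2 : 0 ≤ (t:ℝ)*((t:ℝ) - 2*q - 1) := mul_nonneg hT0 (by linarith)
        linarith [hQC, hp2]
      have ht12 : t = 2*k + 1 ∨ t = 2*k + 2 := by
        have h1 : 2*k < t := by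
          have : ((2*k : ℕ):ℝ) < t := by push_cast; linarith
          exact_mod_cast this
        have h2 : t < 2*k + 3 := by
          have : (t:ℝ) < ((2*k + 3 : ℕ):ℝ) := by push_cast; linarith
          exact_mod_cast this
        omega
      rcases ht12 with ht | ht
      · subst ht
        have hte : ((2*k+1 : ℕ):ℝ) = 2*(k:ℝ)+1 := by push_cast; ring
        rw [hte] at hQC hNT hTq hcase
        have hK1 : (1:ℝ) ≤ k := by
          have h0 : (0:ℝ) < k := by linarith
          have : 0 < k := by exact_mod_cast h0
          exact_mod_cast this
        exact L_B1odd q k n hK1 hku (by linarith) (by linarith [hQC]) hNT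
      · subst ht
        have hte : ((2*k+2 : ℕ):ℝ) = 2*(k:ℝ)+2 := by push_cast; ring
        rw [hte] at hQC hNT hTq hcase
        exact L_B1even q k n hK0 hku (by linarith) (by linarith [hQC]) hNT
    · -- B2
      have hat : (a:ℝ) + 1 ≤ t := by
        have h : a < t := by exact_mod_cast hta
        have : a + 1 ≤ t := h
        exact_mod_cast this
      rcases le_or_gt (2*q+1) (t:ℝ) with hc2 | hc2
      · have hSa : (Sq:ℝ) ≤ (a:ℝ)*n := by linarith
        have hNm : (n:ℝ)*t - 2*q*n ≤ 2*t - 2*q := by linarith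
        have hp2 : 0 ≤ ((n:ℝ)-2)*((t:ℝ)-2*q-1) :=
          mul_nonneg (by linarith) (by linarith)
        have hN1 : (n:ℝ) - 1 ≤ 2*q+1 := by linarith [hp2, hNm]
        exact L_B2big q k n hq hku hN1
      · have hp3 : (a:ℝ)*t ≤ ((t:ℝ)-1)*t :=
          mul_le_mul_of_nonneg_right (by linarith) hT0
        have hstar2 : 2*((n:ℝ)-1)*((t:ℝ)-q) ≤ (t:ℝ)*(2*t-1) := by linarith [hstar, hQaR, hp3]
        have ht12 : t = 2*k + 1 ∨ t = 2*k + 2 := by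
          have h1 : 2*k < t := by
            have : ((2*k : ℕ):ℝ) < t := by push_cast; linarith
            exact_mod_cast this
          have h2 : t < 2*k + 3 := by
            have : (t:ℝ) < ((2*k + 3 : ℕ):ℝ) := by push_cast; linarith
            exact_mod_cast this
          omega
        rcases ht12 with ht | ht
        · subst ht
          have hte : ((2*k+1 : ℕ):ℝ) = 2*(k:ℝ)+1 := by push_cast; ring
          rw [hte] at hstar2 hTq hcase
          have hK1 : (1:ℝ) ≤ k := by
            have h0 : (0:ℝ) < k := by linarith
            have : 0 < k := by exact_mod_cast h0
            exact_mod_cast this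
          exact L_B2odd q k n hK1 hk1 hku (by linarith) (by linarith [hstar2])
        · subst ht
          have hte : ((2*k+2 : ℕ):ℝ) = 2*(k:ℝ)+2 := by push_cast; ring
          rw [hte] at hstar2 hTq hc2
          exact L_B2even q k n hK0 (by linarith) hku (by linarith) (by linarith [hstar2])

set_option maxHeartbeats 1000000 in
/-- A minimal counterexample to the bound `GE[U] ≤ q` (with `q ≥ 1/2`) has at
most `⌊(⌊q⌋+1)²/(⌊q⌋+1−q)⌋ + 1` inputs. -/
theorem GE0_minimal_counterexample_card_le
    [Fintype Hi] [Fintype Oi] [DecidableEq Oi] [Nonempty Hi]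
    (q : ℝ) (hq : 1 / 2 ≤ q) (M : Hi → Oi)
    (hM : q < GE0 M (unif Hi))
    (hmin : ∀ S : Finset Hi, S.Nonempty → S ⊂ Finset.univ →
      GE0 (fun x : ↥S => M x.1) (unif ↥S) ≤ q) :
    Fintype.card Hi ≤ ⌊((⌊q⌋₊ : ℝ) + 1) ^ 2 / ((⌊q⌋₊ : ℝ) + 1 - q)⌋₊ + 1 := by
  classical
  set n := Fintype.card Hi with hn
  set k := ⌊q⌋₊ with hk
  have hq0 : (0:ℝ) ≤ q := by linarith
  have hk1 : (k : ℝ) ≤ q := Nat.floor_le hq0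
  have hk2 : q < (k : ℝ) + 1 := Nat.lt_floor_add_one q
  set cnt : Oi → ℕ := fun o => (Finset.univ.filter (fun h => M h = o)).card with hcnt
  have hn0 : 0 < n := Fintype.card_pos
  have hsum : ∑ o : Oi, cnt o = n := by
    rw [hn, ← Finset.card_univ]
    exact (Finset.card_eq_sum_card_fiberwise (f := M) (fun x _ => Finset.mem_univ (M x))).symm
  -- choose maximal block
  have hONE : Nonempty Oi := ⟨M (Classical.arbitrary Hi)⟩
  obtain ⟨b, -, hbmax⟩ := Finset.exists_max_image (Finset.univ : Finset Oi) cnt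
    Finset.univ_nonempty
  have hbmax' : ∀ o : Oi, cnt o ≤ cnt b := fun o => hbmax o (Finset.mem_univ o)
  set a := cnt b with ha
  have ha1 : 1 ≤ a := by
    by_contra hcon
    push_neg at hcon
    have : ∀ o : Oi, cnt o = 0 := fun o => by have := hbmax' o; omega
    have : ∑ o : Oi, cnt o = 0 := Finset.sum_eq_zero (fun o _ => this o)
    omega
  have han : a ≤ n := by
    have h := Finset.single_le_sum (f := cnt) (fun o _ => Nat.zero_le _) (Finset.mem_univ b)
    omega
  set t := n - a with htdef
  have hnat : n = a + t := by omega
  set Q := ∑ o ∈ Finset.univ.erase b, cnt o ^ 2 with hQdef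
  set Sq := ∑ o : Oi, cnt o ^ 2 with hSqdef
  have hSq : Sq = a ^ 2 + Q := by
    rw [hSqdef, hQdef, ha, ← Finset.add_sum_erase _ _ (Finset.mem_univ b)]
  have hterase : ∑ o ∈ Finset.univ.erase b, cnt o = t := by
    have := Finset.add_sum_erase Finset.univ cnt (Finset.mem_univ b)
    omega
  have hQt : Q ≤ t ^ 2 := by
    calc Q ≤ ∑ o ∈ Finset.univ.erase b, cnt o * t := by
          apply Finset.sum_le_sum
          intro o ho
          have : cnt o ≤ t := by
            rw [← hterase]
            exact Finset.single_le_sum (fun o _ => Nat.zero_le _) ho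
          calc cnt o ^ 2 = cnt o * cnt o := sq (cnt o) ▸ rfl
            _ ≤ cnt o * t := Nat.mul_le_mul_left _ this
      _ = t * t := by rw [← Finset.sum_mul, hterase]
      _ = t ^ 2 := (sq t).symm
  have hQa : Q ≤ a * t := by
    calc Q ≤ ∑ o ∈ Finset.univ.erase b, a * cnt o := by
          apply Finset.sum_le_sum
          intro o _
          calc cnt o ^ 2 = cnt o * cnt o := sq (cnt o) ▸ rfl
            _ ≤ a * cnt o := Nat.mul_le_mul_right _ (hbmax' o)
      _ = a * t := by rw [← Finset.mul_sum, hterase]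
  have hSn : n ≤ Sq := by
    rw [← hsum, hSqdef]
    exact Finset.sum_le_sum (fun o _ => Nat.le_self_pow two_ne_zero _)
  -- hF
  have hcast : (∑ o : Oi, ((Finset.univ.filter (fun h => M h = o)).card : ℝ) ^ 2) = (Sq : ℝ) := by
    rw [hSqdef]; push_cast; rfl
  rw [GE0_unif_eq M, hcast, ← hn] at hM
  have hnR : (0:ℝ) < (n:ℝ) := by exact_mod_cast hn0
  have hF : 2 * q * n < (n : ℝ) ^ 2 - Sq := by
    rw [lt_div_iff₀ (by positivity)] at hM
    linarith
  -- n > 2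
  have hN2 : 2 < n := by
    have hSnR : (n:ℝ) ≤ (Sq:ℝ) := by exact_mod_cast hSn
    have h1 : (n:ℝ) * 1 ≤ (n:ℝ) * (2 * q) := mul_le_mul_of_nonneg_left (by linarith) hnR.le
    have h2 : 2 * (n:ℝ) < (n:ℝ) ^ 2 := by linarith
    by_contra hcon
    push_neg at hcon
    have : (n:ℝ) ≤ 2 := by exact_mod_cast hcon
    nlinarith [h2, hnR]
  -- the removal subset
  obtain ⟨h₀, hh₀⟩ : ∃ h₀, M h₀ = b := by
    have h1 : 0 < cnt b := by omega
    have h2 : 0 < (Finset.univ.filter (fun h => M h = b)).card := by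
      simpa [hcnt] using h1
    obtain ⟨x, hx⟩ := Finset.card_pos.mp h2
    exact ⟨x, (Finset.mem_filter.mp hx).2⟩
  set S : Finset Hi := Finset.univ.erase h₀ with hSdef
  have hScard : S.card = n - 1 := by
    rw [hSdef, Finset.card_erase_of_mem (Finset.mem_univ h₀), Finset.card_univ, ← hn]
  have hSne : S.Nonempty := by
    rw [← Finset.card_pos, hScard]; omega
  haveI : Nonempty ↥S := ⟨⟨hSne.choose, hSne.choose_spec⟩⟩
  have hSssub : S ⊂ Finset.univ := Finset.erase_ssubset (Finset.mem_univ h₀)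
  have hle := hmin S hSne hSssub
  rw [GE0_unif_eq (fun x : ↥S => M x.1)] at hle
  -- identify cardinalities
  have hcardS : Fintype.card ↥S = n - 1 := by rw [Fintype.card_coe, hScard]
  have hcnt' : ∀ o : Oi, (Finset.univ.filter (fun x : ↥S => M x.1 = o)).card
      = ((Finset.univ.filter (fun h => M h = o)).erase h₀).card := by
    intro o
    rw [Finset.univ_eq_attach, Finset.filter_attach (fun h => M h = o) S, Finset.card_map,
      Finset.card_attach, hSdef, Finset.filter_erase]
  have hcnt'b : ((Finset.univ.filter (fun h => M h = b)).erase h₀).card = a - 1 := by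
    rw [Finset.card_erase_of_mem (Finset.mem_filter.mpr ⟨Finset.mem_univ h₀, hh₀⟩)]
  have hcnt'o : ∀ o : Oi, o ≠ b →
      ((Finset.univ.filter (fun h => M h = o)).erase h₀).card = cnt o := by
    intro o hob
    rw [Finset.erase_eq_of_notMem, hcnt]
    intro hmem
    exact hob ((Finset.mem_filter.mp hmem).2 ▸ hh₀ ▸ ((Finset.mem_filter.mp hmem).2).symm ▸ rfl)
  have hsum' : (∑ o : Oi, ((Finset.univ.filter (fun x : ↥S => M x.1 = o)).card : ℝ) ^ 2)
      = ((a : ℝ) - 1) ^ 2 + (Q : ℝ) := by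
    rw [← Finset.add_sum_erase _ _ (Finset.mem_univ b)]
    congr 1
    · rw [hcnt' b, hcnt'b]
      have : ((a - 1 : ℕ) : ℝ) = (a:ℝ) - 1 := by
        rw [Nat.cast_sub ha1]; norm_num
      rw [this]
    · rw [hQdef]
      push_cast
      apply Finset.sum_congr rfl
      intro o ho
      rw [hcnt' o, hcnt'o o (Finset.ne_of_mem_erase ho)]
  rw [hcardS, hsum'] at hle
  have hcardn1 : ((n - 1 : ℕ) : ℝ) = (n:ℝ) - 1 := by
    rw [Nat.cast_sub (by omega)]; norm_num
  rw [hcardn1] at hle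
  have hR1 : ((n : ℝ) - 1) ^ 2 - (((a : ℝ) - 1) ^ 2 + Q) ≤ 2 * q * ((n : ℝ) - 1) := by
    rw [div_le_iff₀ (by push_cast; nlinarith [hN2] : (0:ℝ) < 2 * ((n:ℝ) - 1))] at hle
    linarith
  have hkey := key_ineq q hq k hk1 hk2 a t Q Sq n hnat hSq hQt hQa hSn hF hR1
  have hfl : n - 1 ≤ ⌊((k : ℝ) + 1) ^ 2 / ((k : ℝ) + 1 - q)⌋₊ := by
    apply Nat.le_floor
    rw [hcardn1]
    exact hkey
  omega
end
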